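/- arXiv:2408.03933 — 2 statements merged into one kernel-verified Lean document; each statement's English description precedes it below -/
import Mathlib

section
/- For every j ∈ [k], every shortest (minimum-cost) path from c_j to d_j in U_int equals the horizontal canonical path Canonical(ℓ; c_j–d_j) for some ℓ ∈ [N]. -/
/-- A directed path (self-avoiding walk) from `s` to `t` in the digraph with
edge relation `E`, given as the list of its vertices in order. -/
structure IsPathList {V : Type*} (E : V → V → Prop) (s t : V) (p : List V) : Prop where
  chain : p.Chain' E
  nodup : p.Nodup
  head : p.head? = some s
  last : p.getLast? = some t

/-- A shortest directed `s⇝t` path, where the length of a path is its number of vertices. -/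
def IsShortestDirPath {V : Type*} (E : V → V → Prop) (s t : V) (p : List V) : Prop :=
  IsPathList E s t p ∧ ∀ q : List V, IsPathList E s t q → p.length ≤ q.length

/-- Symmetrization of a relation: the adjacency of the undirected graph obtained by
forgetting the orientation of the edges. -/
def UAdj {V : Type*} (E : V → V → Prop) (x y : V) : Prop := E x y ∨ E y x

/-- The cost of a path: the sum of the costs of its vertices. -/
def pathCost {V : Type*} (cost : V → ℕ) (p : List V) : ℕ := (p.map cost).sum

/-- A shortest (minimum-cost) `s`–`t` path in the undirected graph obtained from `E`. -/
def IsShortestCostPath {V : Type*} (E : V → V → Prop) (cost : V → ℕ) (s t : V)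
    (p : List V) : Prop :=
  IsPathList (UAdj E) s t p ∧
    ∀ q : List V, IsPathList (UAdj E) s t q → pathCost cost p ≤ pathCost cost q

/-- The (directed) edges traversed by a path, as ordered pairs of consecutive vertices. -/
def dirEdges {V : Type*} (p : List V) : List (V × V) := p.zip p.tail

/-- Two directed paths are edge-disjoint. -/
def EdgeDisj {V : Type*} (p q : List V) : Prop := ∀ e ∈ dirEdges p, e ∉ dirEdges q

/-- The (undirected) edges traversed by a path, as unordered pairs. -/
def uEdges {V : Type*} (p : List V) : List (Sym2 V) := (dirEdges p).map fun e => s(e.1, e.2)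

/-- Two undirected paths are edge-disjoint. -/
def UEdgeDisj {V : Type*} (p q : List V) : Prop := ∀ e ∈ uEdges p, e ∉ uEdges q

/-- Two paths are vertex-disjoint. -/
def VertDisj {V : Type*} (p q : List V) : Prop := ∀ v ∈ p, v ∉ q

/-- The vertices of the intermediate graph `D_int` (also the vertex set of `U_int`):
grid vertices `w_{i,j}^{q,ℓ}` (`grid i j q ℓ`, with `q` the column and `ℓ` the row,
indices `0`-based) and terminal vertices `a i`, `b i`, `c j`, `d j`. -/
inductive DIntV (k N : ℕ) where
  | grid (i j : Fin k) (q ℓ : Fin N)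
  | a (i : Fin k)
  | b (i : Fin k)
  | c (j : Fin k)
  | d (j : Fin k)
  deriving DecidableEq, Fintype

/-- The directed edges of `D_int`. -/
inductive DIntE (k N : ℕ) : DIntV k N → DIntV k N → Prop where
  /-- `w_{i,j}^{q,ℓ} → w_{i,j}^{q,ℓ+1}` for `ℓ < N` -/
  | up (i j : Fin k) (q ℓ ℓ' : Fin N) (h : (ℓ' : ℕ) = (ℓ : ℕ) + 1) :
      DIntE k N (.grid i j q ℓ) (.grid i j q ℓ')
  /-- `w_{i,j}^{q,ℓ} → w_{i,j}^{q+1,ℓ}` for `q < N` -/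
  | right (i j : Fin k) (q q' ℓ : Fin N) (h : (q' : ℕ) = (q : ℕ) + 1) :
      DIntE k N (.grid i j q ℓ) (.grid i j q' ℓ)
  /-- `w_{i,j}^{N,ℓ} → w_{i+1,j}^{1,ℓ}` for `i < k` -/
  | hmatch (i i' j : Fin k) (q q' ℓ : Fin N)
      (hi : (i' : ℕ) = (i : ℕ) + 1) (hq : (q : ℕ) + 1 = N) (hq' : (q' : ℕ) = 0) :
      DIntE k N (.grid i j q ℓ) (.grid i' j q' ℓ)
  /-- `w_{i,j}^{ℓ,N} → w_{i,j+1}^{ℓ,1}` for `j < k` -/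
  | vmatch (i j j' : Fin k) (q ℓ ℓ' : Fin N)
      (hj : (j' : ℕ) = (j : ℕ) + 1) (hl : (ℓ : ℕ) + 1 = N) (hl' : (ℓ' : ℕ) = 0) :
      DIntE k N (.grid i j q ℓ) (.grid i j' q ℓ')
  /-- `a_i → w_{i,1}^{q,1}` for all `q ∈ [N]` -/
  | srcA (i j : Fin k) (q ℓ : Fin N) (hj : (j : ℕ) = 0) (hl : (ℓ : ℕ) = 0) :
      DIntE k N (.a i) (.grid i j q ℓ)
  /-- `w_{i,k}^{q,N} → b_i` for all `q ∈ [N]` -/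
  | snkB (i j : Fin k) (q ℓ : Fin N) (hj : (j : ℕ) + 1 = k) (hl : (ℓ : ℕ) + 1 = N) :
      DIntE k N (.grid i j q ℓ) (.b i)
  /-- `c_j → w_{1,j}^{1,ℓ}` for all `ℓ ∈ [N]` -/
  | srcC (i j : Fin k) (q ℓ : Fin N) (hi : (i : ℕ) = 0) (hq : (q : ℕ) = 0) :
      DIntE k N (.c j) (.grid i j q ℓ)
  /-- `w_{k,j}^{N,ℓ} → d_j` for all `ℓ ∈ [N]` -/
  | snkD (i j : Fin k) (q ℓ : Fin N) (hi : (i : ℕ) + 1 = k) (hq : (q : ℕ) + 1 = N) :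
      DIntE k N (.grid i j q ℓ) (.d j)

/-- The horizontal canonical path `Canonical(r; c_j ⇝ d_j)`, as the list of its
vertices : `c_j`, then row `r` of the grids `D_{1,j}, …, D_{k,j}` from left to right,
then `d_j`. -/
def canonH (k N : ℕ) (j : Fin k) (r : Fin N) : List (DIntV k N) :=
  DIntV.c j ::
    (((List.finRange k).flatMap fun i =>
        (List.finRange N).map fun q => DIntV.grid i j q r) ++ [DIntV.d j])

/-- The vertical canonical path `Canonical(r; a_i ⇝ b_i)`, as the list of its
vertices : `a_i`, then column `r` of the grids `D_{i,1}, …, D_{i,k}` from bottom to top,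
then `b_i`. -/
def canonV (k N : ℕ) (i : Fin k) (r : Fin N) : List (DIntV k N) :=
  DIntV.a i ::
    (((List.finRange k).flatMap fun j =>
        (List.finRange N).map fun ℓ => DIntV.grid i j r ℓ) ++ [DIntV.b i])
/-- The adjacency relation of the undirected graph `U_int`: the symmetrization of the
edges of `D_int` (i.e. the same grid, matching and terminal edges, undirected). -/
def UIntAdj (k N : ℕ) : DIntV k N → DIntV k N → Prop := UAdj (DIntE k N)

/-- The vertex costs in `U_int`: each grid (black) vertex has cost `1`, and each
terminal (green) vertex has cost `2kN`. -/
def costInt (k N : ℕ) : DIntV k N → ℕ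
  | .grid _ _ _ _ => 1
  | _ => 2 * k * N

/-! The canonical path costs `5kN`, of which the terminals `c_j`, `d_j` already account for
`4kN`; so the interior of a shortest `c_j`–`d_j` path has cost at most `kN`, hence consists of
at most `kN` grid vertices. In the `kN × kN` grid formed by all the `U_{i,j}`, an edge moves the
horizontal coordinate by at most one, while the interior has to go from horizontal coordinate `0`
(next to `c_j`) to `kN - 1` (next to `d_j`). So it has exactly `kN` vertices and each of its
edges is a forward horizontal step, which never leaves the row. -/

theorem Nat.eq_and_eq_of_mul_add_eq_mul_add {N a b c d : ℕ} (hb : b < N) (hd : d < N)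
    (h : a * N + b = c * N + d) : a = c ∧ b = d := by
  have decode (x y : ℕ) (hy : y < N) : (x * N + y) / N = x ∧ (x * N + y) % N = y :=
    (Nat.div_mod_unique (by omega)).2 ⟨by ring, hy⟩
  obtain ⟨hac, hbd⟩ := decode a b hb
  obtain ⟨hc, hd⟩ := decode c d hd
  rw [h] at hac hbd
  exact ⟨hac.symm.trans hc, hbd.symm.trans hd⟩

theorem List.IsChain.getElem_le_getElem_add {α : Type*} {f : α → ℕ} {l : List α}
    (hl : l.IsChain fun u v => f v ≤ f u + 1) {a b : ℕ} (hab : a ≤ b) (hb : b < l.length) :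
    f l[b] ≤ f l[a] + (b - a) := by
  induction b, hab using Nat.le_induction with
  | base => simp
  | succ b hab ih =>
    have := List.isChain_iff_getElem.1 hl b hb
    have := ih (by omega)
    omega

theorem List.isChain_cons_append_singleton_iff {α : Type*} {R : α → α → Prop} {a b : α}
    {l : List α} (hl : l ≠ []) :
    (a :: (l ++ [b])).IsChain R ↔ R a (l.head hl) ∧ l.IsChain R ∧ R (l.getLast hl) b := by
  simp [List.isChain_cons, List.isChain_append, List.head?_append,
    List.head?_eq_some_head hl, List.getLast?_eq_some_getLast hl]

theorem IsPathList.exists_eq_cons_append_singleton {V : Type*} {E : V → V → Prop} {s t : V}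
    {p : List V} (hp : IsPathList E s t p) (hst : s ≠ t) : ∃ m, p = s :: (m ++ [t]) := by
  obtain ⟨p', rfl⟩ : ∃ p', p = s :: p' := by
    cases p with
    | nil => simpa using hp.head
    | cons x p' => exact ⟨p', by simpa using hp.head⟩
  have hp' : p' ≠ [] := by
    rintro rfl
    exact hst (by simpa using hp.last)
  refine ⟨p'.dropLast, ?_⟩
  have hlast : p'.getLast hp' = t := by
    simpa [List.getLast?_cons, List.getLast?_eq_some_getLast hp'] using hp.last
  rw [← hlast, List.dropLast_append_getLast]

theorem pathCost_cons_append_singleton {V : Type*} (cost : V → ℕ) (a b : V) (l : List V) :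
    pathCost cost (a :: (l ++ [b])) = cost a + pathCost cost l + cost b := by
  simp [pathCost, Nat.add_assoc]

namespace DIntV

variable {k N : ℕ}

def IsGrid : DIntV k N → Prop
  | grid .. => True
  | _ => False

/-- Horizontal and vertical coordinates of `w_{i,j}^{q,ℓ}` in the `kN × kN` grid formed by all
the `U_{i,j}` (junk `0` on terminals). -/
def hpos : DIntV k N → ℕ
  | grid i _ q _ => i * N + q
  | _ => 0

def vpos : DIntV k N → ℕ
  | grid _ j _ ℓ => j * N + ℓ
  | _ => 0

theorem eq_of_hpos_eq_of_vpos_eq {u v : DIntV k N} (hu : u.IsGrid) (hv : v.IsGrid)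
    (hh : u.hpos = v.hpos) (hvv : u.vpos = v.vpos) : u = v := by
  cases u <;> cases v <;> simp only [IsGrid] at hu hv
  case grid.grid i j q ℓ i' j' q' ℓ' =>
    obtain ⟨hi, hq⟩ := Nat.eq_and_eq_of_mul_add_eq_mul_add q.isLt q'.isLt hh
    obtain ⟨hj, hℓ⟩ := Nat.eq_and_eq_of_mul_add_eq_mul_add ℓ.isLt ℓ'.isLt hvv
    simp [Fin.ext hi, Fin.ext hq, Fin.ext hj, Fin.ext hℓ]

theorem hpos_eq_or_of_dIntE {u v : DIntV k N} (h : DIntE k N u v) (hu : u.IsGrid)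
    (hv : v.IsGrid) : v.hpos = u.hpos ∨ (v.hpos = u.hpos + 1 ∧ v.vpos = u.vpos) := by
  cases h <;> simp_all [IsGrid, hpos, vpos, add_mul] <;> omega

theorem hpos_le_of_uAdj {u v : DIntV k N} (h : UAdj (DIntE k N) u v) (hu : u.IsGrid)
    (hv : v.IsGrid) : v.hpos ≤ u.hpos + 1 ∧ (v.hpos = u.hpos + 1 → v.vpos = u.vpos) := by
  rcases h with h | h
  · rcases hpos_eq_or_of_dIntE h hu hv with h' | h' <;> omega
  · rcases hpos_eq_or_of_dIntE h hv hu with h' | h' <;> omega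

theorem dIntE_of_hpos_eq_succ {u v : DIntV k N} (hu : u.IsGrid) (hv : v.IsGrid)
    (hh : v.hpos = u.hpos + 1) (hvv : v.vpos = u.vpos) : DIntE k N u v := by
  cases u <;> cases v <;> simp only [IsGrid] at hu hv
  case grid.grid i j q ℓ i' j' q' ℓ' =>
    simp only [hpos, vpos] at hh hvv
    obtain ⟨hj, hℓ⟩ := Nat.eq_and_eq_of_mul_add_eq_mul_add ℓ'.isLt ℓ.isLt hvv
    obtain rfl := Fin.ext hj
    obtain rfl := Fin.ext hℓ
    by_cases hq : q.val + 1 < N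
    · obtain ⟨hi, hq'⟩ := Nat.eq_and_eq_of_mul_add_eq_mul_add q'.isLt hq (hh.trans (by ring))
      obtain rfl := Fin.ext hi
      exact .right _ _ _ _ _ hq'
    · obtain ⟨hi, hq'⟩ := Nat.eq_and_eq_of_mul_add_eq_mul_add q'.isLt q.pos
        (hh.trans (show i * N + q + 1 = (i + 1) * N + 0 by rw [add_mul]; omega))
      exact .hmatch _ _ _ _ _ _ hi (by omega) hq'

theorem exists_vpos_of_uAdj_c {j : Fin k} {v : DIntV k N} (h : UAdj (DIntE k N) (c j) v) :
    ∃ r : Fin N, v.hpos = 0 ∧ v.vpos = j * N + r := by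
  rcases h with h | h <;> cases h
  case inl.srcC i q ℓ hi hq => exact ⟨ℓ, by simp [hpos, hi, hq], rfl⟩

theorem hpos_add_one_of_uAdj_d {j : Fin k} {v : DIntV k N} (h : UAdj (DIntE k N) v (d j)) :
    v.hpos + 1 = k * N := by
  rcases h with h | h <;> cases h
  case inl.snkD i q ℓ hi hq =>
    simp only [hpos, ← hi, add_mul]
    omega

theorem not_uAdj_c_d {j j' : Fin k} : ¬ UAdj (DIntE k N) (c j) (d j') := by
  rintro (h | h) <;> cases h

theorem pathCost_costInt_eq_length {l : List (DIntV k N)} (hl : ∀ v ∈ l, v.IsGrid) :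
    pathCost (costInt k N) l = l.length := by
  induction l with
  | nil => rfl
  | cons v l ih =>
    obtain ⟨i, j, q, ℓ, rfl⟩ : ∃ i j q ℓ, v = grid i j q ℓ := by
      cases v <;> simp_all [IsGrid]
    simp_all [pathCost, costInt, Nat.add_comm]

theorem isGrid_of_mem_of_pathCost_lt {l : List (DIntV k N)} {v : DIntV k N} (hv : v ∈ l)
    (hl : pathCost (costInt k N) l < 2 * k * N) : v.IsGrid := by
  have := List.le_sum_of_mem (List.mem_map_of_mem (f := costInt k N) hv)
  cases v <;> simp_all [IsGrid, pathCost, costInt] <;> omega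

def rowVertex (j : Fin k) (r : Fin N) (t : Fin (k * N)) : DIntV k N :=
  grid t.divNat j t.modNat r

@[simp]
theorem hpos_rowVertex (j : Fin k) (r : Fin N) (t : Fin (k * N)) :
    (rowVertex j r t).hpos = t := Nat.div_add_mod' _ _

@[simp]
theorem vpos_rowVertex (j : Fin k) (r : Fin N) (t : Fin (k * N)) :
    (rowVertex j r t).vpos = j * N + r := rfl

theorem dIntE_rowVertex_last (j : Fin k) (r : Fin N) (h : k * N - 1 < k * N) :
    DIntE k N (rowVertex j r ⟨k * N - 1, h⟩) (d j) := by
  have hN := r.pos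
  have hk := j.pos
  have hkN : N ≤ k * N := Nat.le_mul_of_pos_left N hk
  obtain ⟨hi, hq⟩ := Nat.eq_and_eq_of_mul_add_eq_mul_add (c := k - 1) (Nat.mod_lt _ hN)
    (by omega : N - 1 < N) ((Nat.div_add_mod' (k * N - 1) N).trans (by rw [Nat.sub_one_mul]; omega))
  exact .snkD _ _ _ _ (by simp [Fin.divNat, hi]; omega) (by simp [Fin.modNat, hq]; omega)

end DIntV

open DIntV

theorem canonH_eq_ofFn {k N : ℕ} (j : Fin k) (r : Fin N) :
    canonH k N j r = c j :: (List.ofFn (rowVertex j r) ++ [d j]) := by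
  rw [List.ofFn_mul]
  simp only [canonH, List.finRange, List.flatMap_def]
  congr
  simp only [List.map_ofFn, Function.comp_def]
  congr! with i q
  exact eq_of_hpos_eq_of_vpos_eq trivial trivial (by rw [hpos_rowVertex]; rfl) rfl

theorem isPathList_canonH {k N : ℕ} (j : Fin k) (r : Fin N) :
    IsPathList (UAdj (DIntE k N)) (c j) (d j) (canonH k N j r) := by
  have hkN : 0 < k * N := Nat.mul_pos j.pos r.pos
  have hne : List.ofFn (rowVertex j r) ≠ [] := List.ne_nil_of_length_pos (by simpa using hkN)
  rw [canonH_eq_ofFn]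
  refine ⟨?_, ?_, rfl, by rw [← List.cons_append, List.getLast?_concat]⟩
  · refine (List.isChain_cons_append_singleton_iff hne).2
      ⟨?_, .imp (fun _ _ => .inl) (List.isChain_ofFn.2 fun t ht => ?_), ?_⟩
    · rw [List.head_ofFn]
      exact .inl (.srcC _ _ _ _ (by simp [Fin.divNat]) (by simp [Fin.modNat]))
    · exact dIntE_of_hpos_eq_succ trivial trivial (by simp) rfl
    · rw [List.getLast_ofFn]
      exact .inl (dIntE_rowVertex_last j r _)
  · have hinj : Function.Injective (rowVertex j r) := fun t t' h =>
      Fin.ext (by simpa using congrArg hpos h)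
    simp [List.nodup_append, List.nodup_ofFn.2 hinj, List.mem_ofFn, rowVertex]

theorem pathCost_canonH {k N : ℕ} (j : Fin k) (r : Fin N) :
    pathCost (costInt k N) (canonH k N j r) = 2 * k * N + k * N + 2 * k * N := by
  rw [canonH_eq_ofFn, pathCost_cons_append_singleton,
    pathCost_costInt_eq_length fun v hv => by obtain ⟨t, rfl⟩ := List.mem_ofFn.1 hv; trivial]
  simp [costInt]

theorem eq_ofFn_rowVertex {k N : ℕ} {j : Fin k} {r : Fin N} {m : List (DIntV k N)}
    (hm : m ≠ []) (hchain : m.IsChain (UAdj (DIntE k N))) (hgrid : ∀ v ∈ m, v.IsGrid)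
    (hlen : m.length ≤ k * N)
    (hhead : (m.head hm).hpos = 0 ∧ (m.head hm).vpos = j * N + r)
    (hlast : (m.getLast hm).hpos + 1 = k * N) :
    m = List.ofFn (rowVertex j r) := by
  have hstep : m.IsChain fun u v =>
      v.hpos ≤ u.hpos + 1 ∧ (v.hpos = u.hpos + 1 → v.vpos = u.vpos) :=
    hchain.imp_of_mem_imp fun u v hu hv h => hpos_le_of_uAdj h (hgrid u hu) (hgrid v hv)
  have hclimb : m.IsChain fun u v => v.hpos ≤ u.hpos + 1 := hstep.imp fun _ _ h => h.1
  rw [List.head_eq_getElem] at hhead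
  rw [List.getLast_eq_getElem] at hlast
  have hpos_eq (n : ℕ) (hn : n < m.length) : m[n].hpos = n := by
    have := hclimb.getElem_le_getElem_add (Nat.zero_le n) hn
    have := hclimb.getElem_le_getElem_add (Nat.le_sub_one_of_lt hn) (by omega)
    omega
  have hlen' : m.length = k * N := by
    rw [hpos_eq] at hlast
    have := List.length_pos_iff.2 hm
    omega
  have hvpos (n : ℕ) (hn : n < m.length) : m[n].vpos = j * N + r := by
    induction n with
    | zero => exact hhead.2
    | succ n ih =>
      rw [(List.isChain_iff_getElem.1 hstep n hn).2 (by rw [hpos_eq, hpos_eq]), ih]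
  refine List.ext_getElem (by simp [hlen']) fun n h _ => ?_
  rw [List.getElem_ofFn]
  exact eq_of_hpos_eq_of_vpos_eq (hgrid _ (List.getElem_mem h)) trivial
    (by simp [hpos_eq]) (by simp [hvpos])

theorem UInt_shortest_is_canonH_general (N k : ℕ) (j : Fin k)
    (p : List (DIntV k N))
    (hp : IsShortestCostPath (DIntE k N) (costInt k N) (DIntV.c j) (DIntV.d j) p) :
    ∃ ℓ : Fin N, p = canonH k N j ℓ := by
  obtain ⟨hpath, hmin⟩ := hp
  obtain ⟨m, rfl⟩ := hpath.exists_eq_cons_append_singleton (by simp)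
  have hm : m ≠ [] := by
    rintro rfl
    exact not_uAdj_c_d (List.isChain_pair.1 hpath.chain)
  obtain ⟨hfirst, hchain, hlast⟩ := (List.isChain_cons_append_singleton_iff hm).1 hpath.chain
  obtain ⟨r, hhead⟩ := exists_vpos_of_uAdj_c hfirst
  have hcost := hmin _ (isPathList_canonH j r)
  rw [pathCost_canonH, pathCost_cons_append_singleton] at hcost
  simp only [costInt] at hcost
  have hkN : 0 < k * N := Nat.mul_pos j.pos r.pos
  have hgrid : ∀ v ∈ m, v.IsGrid := fun v hv =>
    isGrid_of_mem_of_pathCost_lt hv (by rw [Nat.mul_assoc]; omega)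
  refine ⟨r, ?_⟩
  have hlen : m.length ≤ k * N := by
    rw [← pathCost_costInt_eq_length hgrid]
    omega
  rw [canonH_eq_ofFn, eq_ofFn_rowVertex hm hchain hgrid hlen hhead (hpos_add_one_of_uAdj_d hlast)]

/-- for every `j ∈ [k]`, every shortest (minimum-cost) `c_j`–`d_j` path in
`U_int` equals the horizontal canonical path `Canonical(ℓ; c_j–d_j)` for some `ℓ ∈ [N]`. -/
theorem UInt_shortest_is_canonH (N k : ℕ) (hN : 1 ≤ N) (hk : 1 ≤ k) (j : Fin k)
    (p : List (DIntV k N))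
    (hp : IsShortestCostPath (DIntE k N) (costInt k N) (DIntV.c j) (DIntV.d j) p) :
    ∃ ℓ : Fin N, p = canonH k N j ℓ :=
  UInt_shortest_is_canonH_general N k j p hp
end

section
/- If G contains a clique {v_{γ_1},…,v_{γ_k}} of size k (k distinct, pairwise adjacent vertices), then the 2k paths Canonical_vertex(γ_i; a_i–b_i) for i ∈ [k] and Canonical_vertex(γ_j; c_j–d_j) for j ∈ [k] are pairwise vertex-disjoint and each is a shortest (minimum-cost) path in U_vertex between its terminal pair; in particular all 2k terminal pairs of (U_vertex, T) can be simultaneously satisfied by pairwise vertex-disjoint shortest paths. -/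
/-- `(q,ℓ) ∈ S_{i,j}`: for `i = j` this means `q = ℓ` and for `i ≠ j` it means that
`v_q v_ℓ` is an edge of `G`. -/
def Split {k N : ℕ} (G : SimpleGraph (Fin N)) (i j : Fin k) (q ℓ : Fin N) : Prop :=
  (i = j ∧ q = ℓ) ∨ (i ≠ j ∧ G.Adj q ℓ)

instance {k N : ℕ} (G : SimpleGraph (Fin N)) [DecidableRel G.Adj]
    (i j : Fin k) (q ℓ : Fin N) : Decidable (Split G i j q ℓ) := by
  unfold Split; infer_instance

/-- The vertices of the graph `D_vertex` (also the vertex set of `U_vertex`): each grid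
vertex `w_{i,j}^{q,ℓ}` of `D_int` gives rise to `gridH i j q ℓ` (the vertex `w_Hor`) and
`gridV i j q ℓ` (the vertex `w_Ver`, which carries edges only when `w` is vertex-split;
when `w` is not split the single vertex `w_Hor = w_Ver` is represented by `gridH` and
`gridV` is isolated), plus the terminal vertices. -/
inductive DVertV (k N : ℕ) where
  | gridH (i j : Fin k) (q ℓ : Fin N)
  | gridV (i j : Fin k) (q ℓ : Fin N)
  | a (i : Fin k)
  | b (i : Fin k)
  | c (j : Fin k)
  | d (j : Fin k)
  deriving DecidableEq

/-- The vertex of `D_vertex` carrying the vertical (south/north) edges at the former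
grid vertex `w_{i,j}^{q,ℓ}`: `w_Ver` if it is vertex-split, and `w_Hor = w_Ver`
otherwise. -/
def vNode {k N : ℕ} (G : SimpleGraph (Fin N)) [DecidableRel G.Adj]
    (i j : Fin k) (q ℓ : Fin N) : DVertV k N :=
  if Split G i j q ℓ then DVertV.gridV i j q ℓ else DVertV.gridH i j q ℓ

/-- The directed edges of `D_vertex`: horizontal (west/east) edges attach to `w_Hor`
and vertical (south/north) edges attach to `w_Ver` (with `w_Hor = w_Ver` at non-split
vertices); terminal edges play the role of the corresponding boundary edges. -/
inductive DVertE (k N : ℕ) (G : SimpleGraph (Fin N)) [DecidableRel G.Adj] :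
    DVertV k N → DVertV k N → Prop where
  /-- former edge `w_{i,j}^{q,ℓ} → w_{i,j}^{q,ℓ+1}` (vertical) -/
  | up (i j : Fin k) (q ℓ ℓ' : Fin N) (h : (ℓ' : ℕ) = (ℓ : ℕ) + 1) :
      DVertE k N G (vNode G i j q ℓ) (vNode G i j q ℓ')
  /-- former edge `w_{i,j}^{q,ℓ} → w_{i,j}^{q+1,ℓ}` (horizontal) -/
  | right (i j : Fin k) (q q' ℓ : Fin N) (h : (q' : ℕ) = (q : ℕ) + 1) :
      DVertE k N G (.gridH i j q ℓ) (.gridH i j q' ℓ)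
  /-- former edge `w_{i,j}^{N,ℓ} → w_{i+1,j}^{1,ℓ}` (horizontal) -/
  | hmatch (i i' j : Fin k) (q q' ℓ : Fin N)
      (hi : (i' : ℕ) = (i : ℕ) + 1) (hq : (q : ℕ) + 1 = N) (hq' : (q' : ℕ) = 0) :
      DVertE k N G (.gridH i j q ℓ) (.gridH i' j q' ℓ)
  /-- former edge `w_{i,j}^{ℓ,N} → w_{i,j+1}^{ℓ,1}` (vertical) -/
  | vmatch (i j j' : Fin k) (q ℓ ℓ' : Fin N)
      (hj : (j' : ℕ) = (j : ℕ) + 1) (hl : (ℓ : ℕ) + 1 = N) (hl' : (ℓ' : ℕ) = 0) :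
      DVertE k N G (vNode G i j q ℓ) (vNode G i j' q ℓ')
  /-- former edge `a_i → w_{i,1}^{q,1}` (vertical: `a_i` plays the south neighbour) -/
  | srcA (i j : Fin k) (q ℓ : Fin N) (hj : (j : ℕ) = 0) (hl : (ℓ : ℕ) = 0) :
      DVertE k N G (.a i) (vNode G i j q ℓ)
  /-- former edge `w_{i,k}^{q,N} → b_i` (vertical) -/
  | snkB (i j : Fin k) (q ℓ : Fin N) (hj : (j : ℕ) + 1 = k) (hl : (ℓ : ℕ) + 1 = N) :
      DVertE k N G (vNode G i j q ℓ) (.b i)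
  /-- former edge `c_j → w_{1,j}^{1,ℓ}` (horizontal: `c_j` plays the west neighbour) -/
  | srcC (i j : Fin k) (q ℓ : Fin N) (hi : (i : ℕ) = 0) (hq : (q : ℕ) = 0) :
      DVertE k N G (.c j) (.gridH i j q ℓ)
  /-- former edge `w_{k,j}^{N,ℓ} → d_j` (horizontal) -/
  | snkD (i j : Fin k) (q ℓ : Fin N) (hi : (i : ℕ) + 1 = k) (hq : (q : ℕ) + 1 = N) :
      DVertE k N G (.gridH i j q ℓ) (.d j)

/-- `Canonical_vertex(r; c_j⇝d_j)`: obtained from `Canonical(r; c_j⇝d_j)` by routing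
through `w_Hor` at every vertex-split grid vertex (and through `w_Hor = w_Ver` at
not-split vertices). -/
def canonVertH (k N : ℕ) (j : Fin k) (r : Fin N) : List (DVertV k N) :=
  DVertV.c j ::
    (((List.finRange k).flatMap fun i =>
        (List.finRange N).map fun q => DVertV.gridH i j q r) ++ [DVertV.d j])

/-- `Canonical_vertex(r; a_i⇝b_i)`: obtained from `Canonical(r; a_i⇝b_i)` by routing
through `w_Ver` at every vertex-split grid vertex (and through `w_Hor = w_Ver` at
not-split vertices). -/
def canonVertV {k N : ℕ} (G : SimpleGraph (Fin N)) [DecidableRel G.Adj]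
    (i : Fin k) (r : Fin N) : List (DVertV k N) :=
  DVertV.a i ::
    (((List.finRange k).flatMap fun j =>
        (List.finRange N).map fun ℓ => vNode G i j r ℓ) ++ [DVertV.b i])
/-- The vertex costs in `U_vertex`: each (black) vertex arising from the splitting of a
grid vertex has cost `1`, and each terminal (green) vertex has cost `2kN`. -/
def costVert (k N : ℕ) : DVertV k N → ℕ
  | .gridH _ _ _ _ => 1
  | .gridV _ _ _ _ => 1
  | _ => 2 * k * N

/-!
A canonical path consists of its two terminals, of cost `2kN` each, and `kN` grid vertices of
cost `1`, so it costs `5kN`. Any other `a_i`–`b_i` path either passes through a third terminal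
and costs at least `6kN`, or avoids the terminals `c_j`, `d_j`; along the remaining edges the
level `jN + ℓ + 1` of a vertex of `U_{i,j}` in row `ℓ` changes by at most one, and it climbs
from `0` at `a_i` to `kN + 1` at `b_i`, so the path has at least `kN` grid vertices. The same
argument with columns handles `c_j`–`d_j`. The vertical path through `U_{i,j}` and the
horizontal one meet only in the vertex `w_{i,j}^{γ_i,γ_j}`, which is split: on the diagonal
because `γ_i = γ_j`, off it because `v_{γ_i} v_{γ_j}` is an edge.
-/

namespace List

theorem isChain_finRange {n : ℕ} {R : Fin n → Fin n → Prop}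
    (h : ∀ a b : Fin n, (b : ℕ) = a + 1 → R a b) : (finRange n).IsChain R := by
  rw [isChain_iff_getElem]
  intro m hm
  exact h _ _ (by simp)

theorem IsChain.add_one_le_add_length {α : Type*} {R : α → α → Prop} (f : α → ℕ) :
    ∀ {l : List α} {s t : α}, l.IsChain R → (∀ u ∈ l, ∀ v ∈ l, R u v → f v ≤ f u + 1) →
      l.head? = some s → l.getLast? = some t → f t + 1 ≤ f s + l.length
  | [], _, _, _, _, hs, _ => by simp at hs
  | [a], _, _, _, _, hs, ht => by simp_all
  | a :: b :: l, s, t, hl, hstep, hs, ht => by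
    obtain ⟨hab, hbl⟩ := isChain_cons_cons.mp hl
    have ih := hbl.add_one_le_add_length f
      (fun u hu v hv => hstep u (mem_cons_of_mem _ hu) v (mem_cons_of_mem _ hv)) rfl
      (by rwa [getLast?_cons_cons] at ht)
    cases Option.some.inj hs
    have := hstep a mem_cons_self b (by simp) hab
    simp only [length_cons] at ih ⊢
    omega

end List

section PathCost

variable {V : Type*} {cost : V → ℕ}

theorem pathCost_eq_add_pathCost_erase [DecidableEq V] {p : List V} {a : V} (ha : a ∈ p) :
    pathCost cost p = cost a + pathCost cost (p.erase a) := by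
  simp only [pathCost, ((List.perm_cons_erase ha).map cost).sum_eq, List.map_cons, List.sum_cons]

theorem length_le_pathCost {p : List V} (hcost : ∀ v ∈ p, 1 ≤ cost v) :
    p.length ≤ pathCost cost p := by
  simpa [pathCost] using List.sum_le_sum (l := p) (f := fun _ => 1) hcost

end PathCost

/-- A path meeting `X` contains three vertices of cost `≥ m`; a path avoiding `X` needs at least
`f t - f s + 1` vertices to climb the potential `f`. -/
theorem IsPathList.min_le_pathCost {V : Type*} [DecidableEq V] {E : V → V → Prop}
    {cost f : V → ℕ} {X : V → Prop} {m : ℕ} {s t : V} {p : List V}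
    (hp : IsPathList (UAdj E) s t p) (hst : s ≠ t) (hcost : ∀ v, 1 ≤ cost v)
    (hs : m ≤ cost s) (ht : m ≤ cost t) (hXs : ¬X s) (hXt : ¬X t) (hX : ∀ x, X x → m ≤ cost x)
    (hf : ∀ u v, E u v → ¬X u → ¬X v → f v ≤ f u + 1 ∧ f u ≤ f v + 1) :
    min (3 * m) (2 * m + f t - f s - 1) ≤ pathCost cost p := by
  have hsp : s ∈ p := List.mem_of_mem_head? hp.head
  have htp : t ∈ p.erase s := (List.mem_erase_of_ne hst.symm).2 (List.mem_of_mem_getLast? hp.last)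
  have hcost_st : pathCost cost p = cost s + (cost t + pathCost cost ((p.erase s).erase t)) := by
    rw [pathCost_eq_add_pathCost_erase hsp, pathCost_eq_add_pathCost_erase htp]
  by_cases hmeet : ∃ x ∈ p, X x
  · obtain ⟨x, hxp, hx⟩ := hmeet
    have hxp' : x ∈ (p.erase s).erase t := by
      refine (List.mem_erase_of_ne ?_).2 ((List.mem_erase_of_ne ?_).2 hxp) <;>
        rintro rfl <;> contradiction
    have := pathCost_eq_add_pathCost_erase (cost := cost) hxp'
    have := hX x hx
    omega
  · push Not at hmeet
    have hlen := List.IsChain.add_one_le_add_length f hp.chain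
      (fun u hu v hv huv => huv.elim (fun h => (hf u v h (hmeet u hu) (hmeet v hv)).1)
        (fun h => (hf v u h (hmeet v hv) (hmeet u hu)).2)) hp.head hp.last
    have hrest := length_le_pathCost (p := (p.erase s).erase t) (fun v _ => hcost v)
    have hlen_st := List.length_pos_of_mem htp
    rw [List.length_erase_of_mem htp] at hrest
    rw [List.length_erase_of_mem hsp] at hrest hlen_st
    omega

section LexEnum

variable {α : Type*} {k N : ℕ}

def lexEnum (g : Fin k → Fin N → α) : List α :=
  (List.finRange k).flatMap fun i => (List.finRange N).map (g i)

theorem mem_lexEnum {g : Fin k → Fin N → α} {v : α} : v ∈ lexEnum g ↔ ∃ i q, g i q = v := by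
  simp [lexEnum]

theorem length_lexEnum (g : Fin k → Fin N → α) : (lexEnum g).length = k * N := by
  simp [lexEnum, List.length_flatMap, List.map_const']

theorem nodup_lexEnum {g : Fin k → Fin N → α}
    (hg : ∀ i i' q q', g i q = g i' q' → i = i' ∧ q = q') : (lexEnum g).Nodup := by
  refine List.nodup_flatMap.2
    ⟨fun i _ => (List.nodup_finRange N).map fun q q' h => (hg _ _ _ _ h).2,
      (List.nodup_finRange k).pairwise_of_forall_ne fun i _ i' _ hii' => ?_⟩
  simp only [Function.onFun, List.disjoint_iff_ne, List.mem_map, List.mem_finRange, true_and]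
  rintro _ ⟨q, rfl⟩ _ ⟨q', rfl⟩ h
  exact hii' (hg _ _ _ _ h).1

theorem head?_lexEnum (hk : 0 < k) (hN : 0 < N) (g : Fin k → Fin N → α) :
    (lexEnum g).head? = some (g ⟨0, hk⟩ ⟨0, hN⟩) := by
  obtain ⟨k, rfl⟩ := Nat.exists_eq_add_one_of_ne_zero hk.ne'
  obtain ⟨N, rfl⟩ := Nat.exists_eq_add_one_of_ne_zero hN.ne'
  simp [lexEnum, List.finRange_succ]

theorem getLast?_lexEnum (hk : 0 < k) (hN : 0 < N) (g : Fin k → Fin N → α) :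
    (lexEnum g).getLast? = some (g ⟨k - 1, by omega⟩ ⟨N - 1, by omega⟩) := by
  obtain ⟨k, rfl⟩ := Nat.exists_eq_add_one_of_ne_zero hk.ne'
  obtain ⟨N, rfl⟩ := Nat.exists_eq_add_one_of_ne_zero hN.ne'
  simp [lexEnum, List.finRange_succ_last]
  rfl

variable {R : α → α → Prop} {g : Fin k → Fin N → α}

theorem isChain_lexEnum (hN : 0 < N)
    (hinner : ∀ (i : Fin k) (q q' : Fin N), (q' : ℕ) = q + 1 → R (g i q) (g i q'))
    (hcross : ∀ (i i' : Fin k) (q q' : Fin N), (i' : ℕ) = i + 1 → (q : ℕ) + 1 = N →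
      (q' : ℕ) = 0 → R (g i q) (g i' q')) :
    (lexEnum g).IsChain R := by
  rw [lexEnum, List.flatMap, List.isChain_flatten (by simpa using fun _ => hN.ne')]
  refine ⟨?_, ?_⟩
  · simp only [List.mem_map, List.mem_finRange, true_and, forall_exists_index,
      forall_apply_eq_imp_iff, List.isChain_map]
    exact fun i => List.isChain_finRange (hinner i)
  · rw [List.isChain_map]
    refine List.isChain_finRange fun i i' hi => ?_
    obtain ⟨N, rfl⟩ := Nat.exists_eq_add_one_of_ne_zero hN.ne'
    have hhead : (List.finRange (N + 1)).head? = some 0 := by simp [List.finRange_succ]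
    have hlast : (List.finRange (N + 1)).getLast? = some (Fin.last N) := by
      simp [List.finRange_succ_last]
    simp only [List.getLast?_map, List.head?_map, hhead, hlast, Option.map_some, Option.mem_def,
      Option.some.injEq]
    rintro _ rfl _ rfl
    exact hcross _ _ _ _ hi (by simp) rfl

theorem isPathList_cons_lexEnum_append {s t : α} (hk : 0 < k) (hN : 0 < N)
    (hg : ∀ i i' q q', g i q = g i' q' → i = i' ∧ q = q')
    (hgs : ∀ i q, g i q ≠ s) (hgt : ∀ i q, g i q ≠ t) (hst : s ≠ t)
    (hinner : ∀ (i : Fin k) (q q' : Fin N), (q' : ℕ) = q + 1 → R (g i q) (g i q'))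
    (hcross : ∀ (i i' : Fin k) (q q' : Fin N), (i' : ℕ) = i + 1 → (q : ℕ) + 1 = N →
      (q' : ℕ) = 0 → R (g i q) (g i' q'))
    (hfirst : ∀ (i : Fin k) (q : Fin N), (i : ℕ) = 0 → (q : ℕ) = 0 → R s (g i q))
    (hlast : ∀ (i : Fin k) (q : Fin N), (i : ℕ) + 1 = k → (q : ℕ) + 1 = N → R (g i q) t) :
    IsPathList R s t (s :: (lexEnum g ++ [t])) where
  chain := by
    refine List.IsChain.cons ?_ ?_
    · refine (isChain_lexEnum hN hinner hcross).append (List.isChain_singleton t) ?_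
      simp only [getLast?_lexEnum hk hN, Option.mem_def, Option.some.injEq, List.head?_cons]
      rintro _ rfl _ rfl
      exact hlast _ _ (by simp; omega) (by simp; omega)
    · simp only [List.head?_append, head?_lexEnum hk hN, Option.mem_def, Option.some_or,
        Option.some.injEq]
      rintro _ rfl
      exact hfirst _ _ rfl rfl
  nodup := by
    simp only [List.nodup_cons, List.mem_append, mem_lexEnum, List.mem_singleton, not_or,
      List.nodup_append, nodup_lexEnum hg, List.not_mem_nil, List.nodup_nil, not_exists]
    refine ⟨⟨hgs, hst⟩, trivial, ⟨not_false, trivial⟩, ?_⟩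
    rintro _ ⟨i, q, rfl⟩ _ rfl
    exact hgt i q
  head := rfl
  last := by rw [← List.cons_append, List.getLast?_concat]

theorem pathCost_cons_lexEnum_append {cost : α → ℕ} (hg : ∀ i q, cost (g i q) = 1) (s t : α) :
    pathCost cost (s :: (lexEnum g ++ [t])) = cost s + k * N + cost t := by
  have : (lexEnum g).map cost = List.replicate (k * N) 1 := by
    refine List.eq_replicate_iff.2 ⟨by rw [List.length_map, length_lexEnum], ?_⟩
    simp only [List.mem_map, mem_lexEnum]
    rintro _ ⟨_, ⟨i, q, rfl⟩, rfl⟩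
    exact hg i q
  simp [pathCost, this, add_assoc]

end LexEnum

namespace DVertV

variable {k N : ℕ}

/- Row and column positions across the whole grid, shifted so that the sources sit at `0` and the
sinks at `kN + 1`. The values at the other pair of terminals are arbitrary: they are only ever
evaluated along paths avoiding those. -/
def vLevel : DVertV k N → ℕ
  | gridH _ j _ ℓ | gridV _ j _ ℓ => j * N + ℓ + 1
  | a _ => 0
  | b _ => k * N + 1
  | c _ | d _ => 0

def hLevel : DVertV k N → ℕ
  | gridH i _ q _ | gridV i _ q _ => i * N + q + 1
  | c _ => 0
  | d _ => k * N + 1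
  | a _ | b _ => 0

def IsAB : DVertV k N → Prop
  | a _ | b _ => True
  | _ => False

def IsCD : DVertV k N → Prop
  | c _ | d _ => True
  | _ => False

end DVertV

open DVertV

section UVertex

variable {k N : ℕ} (G : SimpleGraph (Fin N)) [DecidableRel G.Adj]

@[simp] theorem vLevel_vNode (i j : Fin k) (q ℓ : Fin N) :
    (vNode G i j q ℓ).vLevel = j * N + ℓ + 1 := by
  unfold vNode; split_ifs <;> rfl

@[simp] theorem hLevel_vNode (i j : Fin k) (q ℓ : Fin N) :
    (vNode G i j q ℓ).hLevel = i * N + q + 1 := by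
  unfold vNode; split_ifs <;> rfl

@[simp] theorem costVert_vNode (i j : Fin k) (q ℓ : Fin N) :
    costVert k N (vNode G i j q ℓ) = 1 := by
  unfold vNode; split_ifs <;> rfl

@[simp] theorem vNode_ne_a (i j i' : Fin k) (q ℓ : Fin N) : vNode G i j q ℓ ≠ a i' := by
  unfold vNode; split_ifs <;> simp

@[simp] theorem vNode_ne_b (i j i' : Fin k) (q ℓ : Fin N) : vNode G i j q ℓ ≠ b i' := by
  unfold vNode; split_ifs <;> simp

@[simp] theorem vNode_ne_c (i j j' : Fin k) (q ℓ : Fin N) : vNode G i j q ℓ ≠ c j' := by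
  unfold vNode; split_ifs <;> simp

@[simp] theorem vNode_ne_d (i j j' : Fin k) (q ℓ : Fin N) : vNode G i j q ℓ ≠ d j' := by
  unfold vNode; split_ifs <;> simp

theorem vNode_inj {i i' j j' : Fin k} {q q' ℓ ℓ' : Fin N} :
    vNode G i j q ℓ = vNode G i' j' q' ℓ' ↔ i = i' ∧ j = j' ∧ q = q' ∧ ℓ = ℓ' := by
  refine ⟨fun h => ?_, by rintro ⟨rfl, rfl, rfl, rfl⟩; rfl⟩
  unfold vNode at h
  split_ifs at h <;> simp_all

@[simp] theorem vNode_eq_gridH_iff {i j i' j' : Fin k} {q ℓ q' ℓ' : Fin N} :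
    vNode G i j q ℓ = gridH i' j' q' ℓ' ↔ ¬Split G i j q ℓ ∧ i = i' ∧ j = j' ∧ q = q' ∧ ℓ = ℓ' := by
  unfold vNode; split_ifs <;> simp_all

theorem DVertE.vLevel_le {u v : DVertV k N} (h : DVertE k N G u v) (hu : ¬u.IsCD)
    (hv : ¬v.IsCD) : v.vLevel ≤ u.vLevel + 1 ∧ u.vLevel ≤ v.vLevel + 1 := by
  cases h with
  | up i j q ℓ ℓ' h => simp only [vLevel_vNode]; omega
  | right | hmatch => simp [vLevel]
  | vmatch i j j' q ℓ ℓ' hj hl hl' => simp only [vLevel_vNode, hj, add_one_mul]; omega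
  | srcA i j q ℓ hj hl => rw [vLevel_vNode]; simp only [vLevel, hj, hl, zero_mul]; omega
  | snkB i j q ℓ hj hl => rw [vLevel_vNode]; simp only [vLevel, ← hj, add_one_mul]; omega
  | srcC | snkD => simp [IsCD] at hu hv

theorem DVertE.hLevel_le {u v : DVertV k N} (h : DVertE k N G u v) (hu : ¬u.IsAB)
    (hv : ¬v.IsAB) : v.hLevel ≤ u.hLevel + 1 ∧ u.hLevel ≤ v.hLevel + 1 := by
  cases h with
  | up | vmatch => simp
  | right i j q q' ℓ h => simp only [hLevel]; omega
  | hmatch i i' j q q' ℓ hi hq hq' => simp only [hLevel, hi, hq', add_one_mul]; omega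
  | srcC i j q ℓ hi hq => simp only [hLevel, hi, hq, zero_mul]; omega
  | snkD i j q ℓ hi hq => simp only [hLevel, ← hi, add_one_mul]; omega
  | srcA | snkB => simp [IsAB] at hu hv

theorem canonVertV_eq (i : Fin k) (r : Fin N) :
    canonVertV G i r = a i :: (lexEnum (fun j ℓ => vNode G i j r ℓ) ++ [b i]) := rfl

theorem canonVertH_eq (j : Fin k) (r : Fin N) :
    canonVertH k N j r = c j :: (lexEnum (fun i q => gridH i j q r) ++ [d j]) := rfl

theorem isPathList_canonVertV (hN : 1 ≤ N) (hk : 1 ≤ k) (i : Fin k) (r : Fin N) :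
    IsPathList (UAdj (DVertE k N G)) (a i) (b i) (canonVertV G i r) :=
  isPathList_cons_lexEnum_append hk hN
    (fun _ _ _ _ h => by obtain ⟨-, hj, -, hℓ⟩ := (vNode_inj G).1 h; exact ⟨hj, hℓ⟩)
    (by simp) (by simp) (by simp)
    (fun j _ _ h => .inl (.up i j r _ _ h))
    (fun _ _ _ _ hj hℓ hℓ' => .inl (.vmatch i _ _ r _ _ hj hℓ hℓ'))
    (fun _ _ hj hℓ => .inl (.srcA i _ r _ hj hℓ))
    (fun _ _ hj hℓ => .inl (.snkB i _ r _ hj hℓ))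

theorem isPathList_canonVertH (hN : 1 ≤ N) (hk : 1 ≤ k) (j : Fin k) (r : Fin N) :
    IsPathList (UAdj (DVertE k N G)) (c j) (d j) (canonVertH k N j r) :=
  isPathList_cons_lexEnum_append hk hN
    (fun _ _ _ _ h => by simp only [gridH.injEq] at h; exact ⟨h.1, h.2.2.1⟩)
    (by simp) (by simp) (by simp)
    (fun i _ _ h => .inl (.right i j _ _ r h))
    (fun _ _ _ _ hi hq hq' => .inl (.hmatch _ _ j _ _ r hi hq hq'))
    (fun _ _ hi hq => .inl (.srcC _ j _ r hi hq))
    (fun _ _ hi hq => .inl (.snkD _ j _ r hi hq))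

theorem pathCost_canonVertV (i : Fin k) (r : Fin N) :
    pathCost (costVert k N) (canonVertV G i r) = 5 * (k * N) := by
  rw [canonVertV_eq, pathCost_cons_lexEnum_append (by simp)]
  simp only [costVert]
  ring

theorem pathCost_canonVertH (j : Fin k) (r : Fin N) :
    pathCost (costVert k N) (canonVertH k N j r) = 5 * (k * N) := by
  rw [canonVertH_eq, pathCost_cons_lexEnum_append (by simp [costVert])]
  simp only [costVert]
  ring

theorem one_le_costVert (hN : 1 ≤ N) (hk : 1 ≤ k) (v : DVertV k N) : 1 ≤ costVert k N v := by
  cases v <;> simp only [costVert, le_refl] <;> exact Nat.mul_pos (by omega) hN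

theorem isShortestCostPath_canonVertV (hN : 1 ≤ N) (hk : 1 ≤ k) (i : Fin k) (r : Fin N) :
    IsShortestCostPath (DVertE k N G) (costVert k N) (a i) (b i) (canonVertV G i r) := by
  refine ⟨isPathList_canonVertV G hN hk i r, fun p hp => ?_⟩
  have := hp.min_le_pathCost (by simp) (one_le_costVert hN hk) (m := 2 * k * N) le_rfl le_rfl
    (X := IsCD) not_false not_false (by rintro (_ | _) h <;> simp_all [IsCD, costVert])
    fun _ _ huv => huv.vLevel_le G
  simp only [vLevel, mul_assoc] at this
  rw [pathCost_canonVertV]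
  omega

theorem isShortestCostPath_canonVertH (hN : 1 ≤ N) (hk : 1 ≤ k) (j : Fin k) (r : Fin N) :
    IsShortestCostPath (DVertE k N G) (costVert k N) (c j) (d j) (canonVertH k N j r) := by
  refine ⟨isPathList_canonVertH G hN hk j r, fun p hp => ?_⟩
  have := hp.min_le_pathCost (by simp) (one_le_costVert hN hk) (m := 2 * k * N) le_rfl le_rfl
    (X := IsAB) not_false not_false (by rintro (_ | _) h <;> simp_all [IsAB, costVert])
    fun _ _ huv => huv.hLevel_le G
  simp only [hLevel, mul_assoc] at this
  rw [pathCost_canonVertH]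
  omega

theorem mem_canonVertV {i : Fin k} {r : Fin N} {v : DVertV k N} :
    v ∈ canonVertV G i r ↔ v = a i ∨ (∃ j ℓ, vNode G i j r ℓ = v) ∨ v = b i := by
  simp [canonVertV_eq, mem_lexEnum]

theorem mem_canonVertH {j : Fin k} {r : Fin N} {v : DVertV k N} :
    v ∈ canonVertH k N j r ↔ v = c j ∨ (∃ i q, gridH i j q r = v) ∨ v = d j := by
  simp [canonVertH_eq, mem_lexEnum]

theorem vertDisj_canonVertV {i i' : Fin k} (h : i ≠ i') (r r' : Fin N) :
    VertDisj (canonVertV G i r) (canonVertV G i' r') := by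
  intro v hv hv'
  rw [mem_canonVertV] at hv hv'
  rcases hv with rfl | ⟨j, ℓ, rfl⟩ | rfl <;> rcases hv' with h' | ⟨j', ℓ', h'⟩ | h' <;>
    simp_all [vNode_inj]

theorem vertDisj_canonVertH {j j' : Fin k} (h : j ≠ j') (r r' : Fin N) :
    VertDisj (canonVertH k N j r) (canonVertH k N j' r') := by
  intro v hv hv'
  rw [mem_canonVertH] at hv hv'
  rcases hv with rfl | ⟨i, q, rfl⟩ | rfl <;> rcases hv' with h' | ⟨i', q', h'⟩ | h' <;>
    simp_all

theorem vertDisj_canonVertV_canonVertH {i j : Fin k} {r r' : Fin N} (h : Split G i j r r') :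
    VertDisj (canonVertV G i r) (canonVertH k N j r') := by
  intro v hv hv'
  rw [mem_canonVertV] at hv
  rw [mem_canonVertH] at hv'
  obtain ⟨j', ℓ, rfl⟩ : ∃ j' ℓ, vNode G i j' r ℓ = v := by
    rcases hv with rfl | hv | rfl <;> [simp at hv'; exact hv; simp at hv']
  obtain ⟨i', q, h'⟩ : ∃ i' q, gridH i' j q r' = vNode G i j' r ℓ := by
    rcases hv' with h' | h' | h' <;> [simp at h'; exact h'; simp at h']
  obtain ⟨hns, -, rfl, rfl, rfl⟩ := (vNode_eq_gridH_iff G).1 h'.symm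
  exact hns h

end UVertex

theorem UVert_completeness_general (N k : ℕ) (hN : 1 ≤ N) (hk : 1 ≤ k)
    (G : SimpleGraph (Fin N)) [DecidableRel G.Adj]
    (γ : Fin k → Fin N)
    (hadj : ∀ i i' : Fin k, i ≠ i' → G.Adj (γ i) (γ i')) :
    (∀ i : Fin k,
      IsShortestCostPath (DVertE k N G) (costVert k N) (DVertV.a i) (DVertV.b i)
        (canonVertV G i (γ i))) ∧
    (∀ j : Fin k,
      IsShortestCostPath (DVertE k N G) (costVert k N) (DVertV.c j) (DVertV.d j)
        (canonVertH k N j (γ j))) ∧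
    (∀ i i' : Fin k, i ≠ i' →
      VertDisj (canonVertV G i (γ i)) (canonVertV G i' (γ i'))) ∧
    (∀ j j' : Fin k, j ≠ j' →
      VertDisj (canonVertH k N j (γ j)) (canonVertH k N j' (γ j'))) ∧
    (∀ i j : Fin k, VertDisj (canonVertV G i (γ i)) (canonVertH k N j (γ j))) := by
  have hsplit (i j : Fin k) : Split G i j (γ i) (γ j) := by
    by_cases h : i = j
    · exact .inl ⟨h, congrArg γ h⟩
    · exact .inr ⟨h, hadj i j h⟩
  exact ⟨fun i => isShortestCostPath_canonVertV G hN hk i (γ i),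
    fun j => isShortestCostPath_canonVertH G hN hk j (γ j),
    fun _ _ h => vertDisj_canonVertV G h _ _,
    fun _ _ h => vertDisj_canonVertH h _ _,
    fun _ _ => vertDisj_canonVertV_canonVertH G (hsplit _ _)⟩

/-- if `G` contains a clique `{v_{γ_1},…,v_{γ_k}}` of size `k` (`k`
distinct, pairwise adjacent vertices), then the `2k` paths
`Canonical_vertex(γ_i; a_i–b_i)` (`i ∈ [k]`) and `Canonical_vertex(γ_j; c_j–d_j)`
(`j ∈ [k]`) are pairwise vertex-disjoint and each is a shortest (minimum-cost) path in
`U_vertex` between its terminal pair: all `2k` terminal pairs of `(U_vertex, T)` are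
simultaneously satisfied. -/
theorem UVert_completeness (N k : ℕ) (hN : 1 ≤ N) (hk : 1 ≤ k)
    (G : SimpleGraph (Fin N)) [DecidableRel G.Adj]
    (γ : Fin k → Fin N) (hinj : Function.Injective γ)
    (hadj : ∀ i i' : Fin k, i ≠ i' → G.Adj (γ i) (γ i')) :
    (∀ i : Fin k,
      IsShortestCostPath (DVertE k N G) (costVert k N) (DVertV.a i) (DVertV.b i)
        (canonVertV G i (γ i))) ∧
    (∀ j : Fin k,
      IsShortestCostPath (DVertE k N G) (costVert k N) (DVertV.c j) (DVertV.d j)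
        (canonVertH k N j (γ j))) ∧
    (∀ i i' : Fin k, i ≠ i' →
      VertDisj (canonVertV G i (γ i)) (canonVertV G i' (γ i'))) ∧
    (∀ j j' : Fin k, j ≠ j' →
      VertDisj (canonVertH k N j (γ j)) (canonVertH k N j' (γ j'))) ∧
    (∀ i j : Fin k, VertDisj (canonVertV G i (γ i)) (canonVertH k N j (γ j))) :=
  UVert_completeness_general N k hN hk G γ hadj
end
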